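/- arXiv:1008.5018 — 2 statements merged into one kernel-verified Lean document; each statement's English description precedes it below -/
import Mathlib

section
/- For any two-form F on Minkowski space for which ℓ := (1 + I₁[F] - I₂²[F])^{1/2} is real (i.e. 1 + I₁ - I₂² ≥ 0), the MBI energy-momentum tensor T_{μν} = ℓ^{-1}(F_μ^κ F_{νκ} - I₂² g_{μν}) + g_{μν}(1-ℓ) satisfies the dominant energy condition: T(X,Y) ≥ 0 for all pairs of future-directed causal vectors X, Y. -/
open scoped BigOperators

/-- The Minkowski metric `g = diag(-1,1,1,1)` on `ℝ^4` (equal to its own inverse). -/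
noncomputable def η (μ ν : Fin 4) : ℝ := if μ = ν then (if μ = 0 then -1 else 1) else 0

/-- The volume form of Minkowski space, normalized by `ε₀₁₂₃ = 1`
(totally antisymmetric, vanishing on repeated indices). -/
noncomputable def eps (a b c d : Fin 4) : ℝ :=
  ((b.val : ℝ) - a.val) * ((c.val : ℝ) - a.val) * ((d.val : ℝ) - a.val) *
  ((c.val : ℝ) - b.val) * ((d.val : ℝ) - b.val) * ((d.val : ℝ) - c.val) / 12

/-- Raising both indices of a two-form with the inverse metric. -/
noncomputable def raise (F : Fin 4 → Fin 4 → ℝ) (μ ν : Fin 4) : ℝ :=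
  ∑ α : Fin 4, ∑ β : Fin 4, η μ α * η ν β * F α β

/-- The Hodge dual `⋆F_{μν} = (1/2) ε_{μνκλ} F^{κλ}`. -/
noncomputable def dual (F : Fin 4 → Fin 4 → ℝ) (μ ν : Fin 4) : ℝ :=
  (1/2) * ∑ κ : Fin 4, ∑ l : Fin 4, eps μ ν κ l * raise F κ l

/-- The first electromagnetic invariant `I₁ = (1/2) F_{κλ} F^{κλ}`. -/
noncomputable def I₁ (F : Fin 4 → Fin 4 → ℝ) : ℝ :=
  (1/2) * ∑ κ : Fin 4, ∑ l : Fin 4, F κ l * raise F κ l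

/-- The second electromagnetic invariant `I₂ = (1/4) F_{κλ} ⋆F^{κλ}`. -/
noncomputable def I₂ (F : Fin 4 → Fin 4 → ℝ) : ℝ :=
  (1/4) * ∑ κ : Fin 4, ∑ l : Fin 4, F κ l * raise (dual F) κ l

/-- The Minkowski inner product `g(X,Y)` of two vectors. -/
noncomputable def ip (X Y : Fin 4 → ℝ) : ℝ := ∑ μ : Fin 4, ∑ ν : Fin 4, η μ ν * X μ * Y ν

/-- `ℓ = (1 + I₁ - I₂²)^{1/2}`, where the Lagrangian of the MBI system is real-valued. -/
noncomputable def ℓMBI (F : Fin 4 → Fin 4 → ℝ) : ℝ := Real.sqrt (1 + I₁ F - (I₂ F) ^ 2)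

/-- The MBI energy-momentum tensor
`T_{μν} = ℓ⁻¹ (F_μ^κ F_{νκ} - I₂² g_{μν}) + g_{μν} (1 - ℓ)`. -/
noncomputable def TMBI (F : Fin 4 → Fin 4 → ℝ) (μ ν : Fin 4) : ℝ :=
  (ℓMBI F)⁻¹ * ((∑ κ : Fin 4, ∑ l : Fin 4, F μ κ * η κ l * F ν l) - (I₂ F) ^ 2 * η μ ν)
    + η μ ν * (1 - ℓMBI F)

set_option maxHeartbeats 4000000

private lemma csAux (u s1 s2 s3 t z1 z2 z3 : ℝ) (hu : 0 ≤ u) (hs : s1^2+s2^2+s3^2 ≤ u^2)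
    (ht : 0 ≤ t) (hz : z1^2+z2^2+z3^2 ≤ t^2) :
    0 ≤ u*t + (s1*z1+s2*z2+s3*z3) := by
  nlinarith [sq_nonneg (s1*z2-s2*z1), sq_nonneg (s1*z3-s3*z1), sq_nonneg (s2*z3-s3*z2),
    sq_nonneg (u*t + (s1*z1+s2*z2+s3*z3)), mul_nonneg hu ht,
    sq_nonneg (s1*z1+s2*z2+s3*z3), mul_nonneg (mul_nonneg hu ht) (mul_nonneg hu ht)]

private lemma sqrtLe (A L : ℝ) (hA : 0 ≤ A) (hL : 0 < L) (h : L^2 ≤ A^2) : L ≤ A := by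
  nlinarith

private lemma etaEq (μ ν : Fin 4) :
    η μ ν = if μ = ν then (if μ = 0 then (-1:ℝ) else 1) else 0 := rfl

private lemma raiseEq (F : Fin 4 → Fin 4 → ℝ) (μ ν : Fin 4) :
    raise F μ ν = (if μ = 0 then (-1:ℝ) else 1) * (if ν = 0 then (-1:ℝ) else 1) * F μ ν := by
  fin_cases μ <;> fin_cases ν <;> simp [raise, η, Fin.sum_univ_four]

private lemma lemWsq (a b c d e f x0 x1 x2 x3 : ℝ) (hx : x1^2+x2^2+x3^2 ≤ x0^2) :
    ((1/2)*f^2*x1 + (-1)*e*f*x2 + (-1/2)*e^2*x1 + d*f*x3 + (-1/2)*d^2*x1 + (-1)*c*e*x0 + (-1/2)*c^2*x1 + (-1)*b*d*x0 + (-1/2)*b^2*x1 + a*c*x3 + a*b*x2 + (1/2)*a^2*x1)^2 + ((-1/2)*f^2*x2 + (-1)*e*f*x1 + (1/2)*e^2*x2 + (-1)*d*e*x3 + (-1/2)*d^2*x2 + (-1)*c*f*x0 + (-1/2)*c^2*x2 + b*c*x3 + (1/2)*b^2*x2 + a*d*x0 + a*b*x1 + (-1/2)*a^2*x2)^2 +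 ((-1/2)*f^2*x3 + (-1/2)*e^2*x3 + d*f*x1 + (-1)*d*e*x2 + (1/2)*d^2*x3 + (1/2)*c^2*x3 + b*f*x0 + b*c*x2 + (-1/2)*b^2*x3 + a*e*x0 + a*c*x1 + (-1/2)*a^2*x3)^2 ≤ ((1/2)*f^2*x0 + (1/2)*e^2*x0 + (1/2)*d^2*x0 + c*f*x2 + c*e*x1 + (1/2)*c^2*x0 + (-1)*b*f*x3 + b*d*x1 + (1/2)*b^2*x0 + (-1)*a*e*x3 + (-1)*a*d*x2 + (1/2)*a^2*x0)^2 := by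
  have hid : ((1/2)*f^2*x0 + (1/2)*e^2*x0 + (1/2)*d^2*x0 + c*f*x2 + c*e*x1 + (1/2)*c^2*x0 + (-1)*b*f*x3 + b*d*x1 + (1/2)*b^2*x0 + (-1)*a*e*x3 + (-1)*a*d*x2 + (1/2)*a^2*x0)^2 - (((1/2)*f^2*x1 + (-1)*e*f*x2 + (-1/2)*e^2*x1 + d*f*x3 + (-1/2)*d^2*x1 + (-1)*c*e*x0 + (-1/2)*c^2*x1 + (-1)*b*d*x0 + (-1/2)*b^2*x1 + a*c*x3 + a*b*x2 + (1/2)*a^2*x1)^2 + ((-1/2)*f^2*x2 + (-1)*e*f*x1 + (1/2)*e^2*x2 + (-1)*d*e*x3 + (-1/2)*d^2*x2 + (-1)*c*f*x0 + (-1/2)*c^2*x2 + b*c*x3 + (1/2)*b^2*x2 + a*d*x0 + a*b*x1 + (-1/2)*a^2*x2)^2 + ((-1/2)*f^2*x3 + (-1/2)*e^2*x3 + d*f*x1 + (-1)*d*e*x2 + (1/2)*d^2*x3 + (1/2)*c^2*x3 + b*f*x0 + b*c*x2 + (-1/2)*b^2*x3 + a*e*x0 + a*c*x1 + (-1/2)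*a^2*x3)^2)
      = (((f^2 + e^2 + d^2 + (-1)*c^2 + (-1)*b^2 + (-1)*a^2)/2)^2 + ((-1)*c*d + b*e + (-1)*a*f)^2) * (x0^2 - (x1^2+x2^2+x3^2)) := by ring
  linarith [hid, mul_nonneg (show (0:ℝ) ≤ ((f^2 + e^2 + d^2 + (-1)*c^2 + (-1)*b^2 + (-1)*a^2)/2)^2 + ((-1)*c*d + b*e + (-1)*a*f)^2 by positivity)
    (show (0:ℝ) ≤ x0^2 - (x1^2+x2^2+x3^2) by linarith)]

private lemma lemW0 (a b c d e f x0 x1 x2 x3 : ℝ) (hx : x1^2+x2^2+x3^2 ≤ x0^2) (hx0 : 0 < x0) :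
    0 ≤ ((1/2)*f^2*x0 + (1/2)*e^2*x0 + (1/2)*d^2*x0 + c*f*x2 + c*e*x1 + (1/2)*c^2*x0 + (-1)*b*f*x3 + b*d*x1 + (1/2)*b^2*x0 + (-1)*a*e*x3 + (-1)*a*d*x2 + (1/2)*a^2*x0) := by
  have hu : (c*e + b*d)^2 + (c*f + (-1)*a*d)^2 + ((-1)*b*f + (-1)*a*e)^2 ≤ ((1/2)*f^2 + (1/2)*e^2 + (1/2)*d^2 + (1/2)*c^2 + (1/2)*b^2 + (1/2)*a^2)^2 := by
    linarith [sq_nonneg (f^2 + e^2 + d^2 + (-1)*c^2 + (-1)*b^2 + (-1)*a^2), sq_nonneg ((-1)*c*d + b*e + (-1)*a*f)]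
  linarith [csAux ((1/2)*f^2 + (1/2)*e^2 + (1/2)*d^2 + (1/2)*c^2 + (1/2)*b^2 + (1/2)*a^2) (c*e + b*d) (c*f + (-1)*a*d) ((-1)*b*f + (-1)*a*e) x0 x1 x2 x3 (by positivity) hu hx0.le hx]

private lemma lemM (a b c d e f x0 x1 x2 x3 y0 y1 y2 y3 : ℝ)
    (hx : x1^2+x2^2+x3^2 ≤ x0^2) (hx0 : 0 < x0)
    (hy : y1^2+y2^2+y3^2 ≤ y0^2) (hy0 : 0 < y0) :
    0 ≤ ((1/2)*f^2*x3*y3 + (1/2)*f^2*x2*y2 + (-1/2)*f^2*x1*y1 + (1/2)*f^2*x0*y0 + e*f*x2*y1 + e*f*x1*y2 + (1/2)*e^2*x3*y3 + (-1/2)*e^2*x2*y2 + (1/2)*e^2*x1*y1 + (1/2)*e^2*x0*y0 + (-1)*d*f*x3*y1 + (-1)*d*f*x1*y3 + d*e*x3*y2 + d*e*x2*y3 + (-1/2)*d^2*x3*y3 + (1/2)*d^2*x2*y2 + (1/2)*d^2*x1*y1 + (1/2)*d^2*x0*y0 + c*f*x2*y0 + c*f*x0*y2 + c*e*x1*y0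 + c*e*x0*y1 + (-1/2)*c^2*x3*y3 + (1/2)*c^2*x2*y2 + (1/2)*c^2*x1*y1 + (1/2)*c^2*x0*y0 + (-1)*b*f*x3*y0 + (-1)*b*f*x0*y3 + b*d*x1*y0 + b*d*x0*y1 + (-1)*b*c*x3*y2 + (-1)*b*c*x2*y3 + (1/2)*b^2*x3*y3 + (-1/2)*b^2*x2*y2 + (1/2)*b^2*x1*y1 + (1/2)*b^2*x0*y0 + (-1)*a*e*x3*y0 + (-1)*a*e*x0*y3 + (-1)*a*d*x2*y0 + (-1)*a*d*x0*y2 + (-1)*a*c*x3*y1 + (-1)*a*c*x1*y3 + (-1)*a*b*x2*y1 + (-1)*a*b*x1*y2 + (1/2)*a^2*x3*y3 + (1/2)*a^2*x2*y2 + (-1/2)*a^2*x1*y1 + (1/2)*a^2*x0*y0) := by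
  have hW0 := lemW0 a b c d e f x0 x1 x2 x3 hx hx0
  have hWsq := lemWsq a b c d e f x0 x1 x2 x3 hx
  have hs : (-((1/2)*f^2*x1 + (-1)*e*f*x2 + (-1/2)*e^2*x1 + d*f*x3 + (-1/2)*d^2*x1 + (-1)*c*e*x0 + (-1/2)*c^2*x1 + (-1)*b*d*x0 + (-1/2)*b^2*x1 + a*c*x3 + a*b*x2 + (1/2)*a^2*x1))^2 + (-((-1/2)*f^2*x2 + (-1)*e*f*x1 + (1/2)*e^2*x2 + (-1)*d*e*x3 + (-1/2)*d^2*x2 + (-1)*c*f*x0 + (-1/2)*c^2*x2 + b*c*x3 + (1/2)*b^2*x2 + a*d*x0 + a*b*x1 + (-1/2)*a^2*x2))^2 + (-((-1/2)*f^2*x3 + (-1/2)*e^2*x3 + d*f*x1 + (-1)*d*e*x2 + (1/2)*d^2*x3 + (1/2)*c^2*x3 + b*f*x0 + b*c*x2 + (-1/2)*b^2*x3 + a*e*x0 + a*c*x1 + (-1/2)*a^2*x3))^2 ≤ ((1/2)*f^2*x0 + (1/2)*e^2*x0 + (1/2)*d^2*x0 + c*f*x2 + c*e*x1 + (1/2)*c^2*x0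 + (-1)*b*f*x3 + b*d*x1 + (1/2)*b^2*x0 + (-1)*a*e*x3 + (-1)*a*d*x2 + (1/2)*a^2*x0)^2 := by linarith [hWsq]
  linarith [csAux ((1/2)*f^2*x0 + (1/2)*e^2*x0 + (1/2)*d^2*x0 + c*f*x2 + c*e*x1 + (1/2)*c^2*x0 + (-1)*b*f*x3 + b*d*x1 + (1/2)*b^2*x0 + (-1)*a*e*x3 + (-1)*a*d*x2 + (1/2)*a^2*x0) (-((1/2)*f^2*x1 + (-1)*e*f*x2 + (-1/2)*e^2*x1 + d*f*x3 + (-1/2)*d^2*x1 + (-1)*c*e*x0 + (-1/2)*c^2*x1 + (-1)*b*d*x0 + (-1/2)*b^2*x1 + a*c*x3 + a*b*x2 + (1/2)*a^2*x1)) (-((-1/2)*f^2*x2 + (-1)*e*f*x1 + (1/2)*e^2*x2 + (-1)*d*e*x3 + (-1/2)*d^2*x2 + (-1)*c*f*x0 + (-1/2)*c^2*x2 + b*c*x3 + (1/2)*b^2*x2 + a*d*x0 + a*b*x1 + (-1/2)*a^2*x2)) (-((-1/2)*f^2*x3 + (-1/2)*e^2*x3 + d*f*x1 + (-1)*d*e*x2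 + (1/2)*d^2*x3 + (1/2)*c^2*x3 + b*f*x0 + b*c*x2 + (-1/2)*b^2*x3 + a*e*x0 + a*c*x1 + (-1/2)*a^2*x3)) y0 y1 y2 y3 hW0 hs hy0.le hy]

private lemma lemKey (a b c d e f x0 x1 x2 x3 y0 y1 y2 y3 L : ℝ) (hLne : L ≠ 0)
    (hL2 : L^2 = 1 + (f^2 + e^2 + d^2 + (-1)*c^2 + (-1)*b^2 + (-1)*a^2) - ((-1)*c*d + b*e + (-1)*a*f)^2) :
    L⁻¹ * ((f^2*x3*y3 + f^2*x2*y2 + e*f*x2*y1 + e*f*x1*y2 + e^2*x3*y3 + e^2*x1*y1 + (-1)*d*f*x3*y1 + (-1)*d*f*x1*y3 + d*e*x3*y2 + d*e*x2*y3 + d^2*x2*y2 + d^2*x1*y1 + c*f*x2*y0 + c*f*x0*y2 + c*e*x1*y0 + c*e*x0*y1 + (-1)*c^2*x3*y3 + c^2*x0*y0 + (-1)*b*f*x3*y0 + (-1)*b*f*x0*y3 + b*d*x1*y0 + b*d*x0*y1 + (-1)*b*c*x3*y2 + (-1)*b*c*x2*y3 + (-1)*b^2*x2*y2 + b^2*x0*y0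 + (-1)*a*e*x3*y0 + (-1)*a*e*x0*y3 + (-1)*a*d*x2*y0 + (-1)*a*d*x0*y2 + (-1)*a*c*x3*y1 + (-1)*a*c*x1*y3 + (-1)*a*b*x2*y1 + (-1)*a*b*x1*y2 + (-1)*a^2*x1*y1 + a^2*x0*y0) - ((-1)*c*d + b*e + (-1)*a*f)^2 * (x3*y3 + x2*y2 + x1*y1 + (-1)*x0*y0)) + (x3*y3 + x2*y2 + x1*y1 + (-1)*x0*y0) * (1 - L)
      = L⁻¹ * (((1/2)*f^2*x3*y3 + (1/2)*f^2*x2*y2 + (-1/2)*f^2*x1*y1 + (1/2)*f^2*x0*y0 + e*f*x2*y1 + e*f*x1*y2 + (1/2)*e^2*x3*y3 + (-1/2)*e^2*x2*y2 + (1/2)*e^2*x1*y1 + (1/2)*e^2*x0*y0 + (-1)*d*f*x3*y1 + (-1)*d*f*x1*y3 + d*e*x3*y2 + d*e*x2*y3 + (-1/2)*d^2*x3*y3 + (1/2)*d^2*x2*y2 + (1/2)*d^2*x1*y1 + (1/2)*d^2*x0*y0 + c*f*x2*y0 + c*f*x0*y2 + c*e*x1*y0 + c*e*x0*y1 + (-1/2)*c^2*x3*y3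 + (1/2)*c^2*x2*y2 + (1/2)*c^2*x1*y1 + (1/2)*c^2*x0*y0 + (-1)*b*f*x3*y0 + (-1)*b*f*x0*y3 + b*d*x1*y0 + b*d*x0*y1 + (-1)*b*c*x3*y2 + (-1)*b*c*x2*y3 + (1/2)*b^2*x3*y3 + (-1/2)*b^2*x2*y2 + (1/2)*b^2*x1*y1 + (1/2)*b^2*x0*y0 + (-1)*a*e*x3*y0 + (-1)*a*e*x0*y3 + (-1)*a*d*x2*y0 + (-1)*a*d*x0*y2 + (-1)*a*c*x3*y1 + (-1)*a*c*x1*y3 + (-1)*a*b*x2*y1 + (-1)*a*b*x1*y2 + (1/2)*a^2*x3*y3 + (1/2)*a^2*x2*y2 + (-1/2)*a^2*x1*y1 + (1/2)*a^2*x0*y0) + (x3*y3 + x2*y2 + x1*y1 + (-1)*x0*y0) * (L - 1 - (f^2 + e^2 + d^2 + (-1)*c^2 + (-1)*b^2 + (-1)*a^2)/2)) := by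
  have hinv : L⁻¹ * L = 1 := inv_mul_cancel₀ hLne
  linear_combination ((x3*y3 + x2*y2 + x1*y1 + (-1)*x0*y0)*L - (x3*y3 + x2*y2 + x1*y1 + (-1)*x0*y0)) * hinv + (-(L⁻¹ * (x3*y3 + x2*y2 + x1*y1 + (-1)*x0*y0))) * hL2

private lemma mainIneq (a b c d e f x0 x1 x2 x3 y0 y1 y2 y3 L : ℝ)
    (hL2 : L^2 = 1 + (f^2 + e^2 + d^2 + (-1)*c^2 + (-1)*b^2 + (-1)*a^2) - ((-1)*c*d + b*e + (-1)*a*f)^2) (hLpos : 0 < L)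
    (hx : x1^2+x2^2+x3^2 ≤ x0^2) (hx0 : 0 < x0)
    (hy : y1^2+y2^2+y3^2 ≤ y0^2) (hy0 : 0 < y0) :
    0 ≤ L⁻¹ * ((f^2*x3*y3 + f^2*x2*y2 + e*f*x2*y1 + e*f*x1*y2 + e^2*x3*y3 + e^2*x1*y1 + (-1)*d*f*x3*y1 + (-1)*d*f*x1*y3 + d*e*x3*y2 + d*e*x2*y3 + d^2*x2*y2 + d^2*x1*y1 + c*f*x2*y0 + c*f*x0*y2 + c*e*x1*y0 + c*e*x0*y1 + (-1)*c^2*x3*y3 + c^2*x0*y0 + (-1)*b*f*x3*y0 + (-1)*b*f*x0*y3 + b*d*x1*y0 + b*d*x0*y1 + (-1)*b*c*x3*y2 + (-1)*b*c*x2*y3 + (-1)*b^2*x2*y2 + b^2*x0*y0 + (-1)*a*e*x3*y0 + (-1)*a*e*x0*y3 + (-1)*a*d*x2*y0 + (-1)*a*d*x0*y2 + (-1)*a*c*x3*y1 + (-1)*a*c*x1*y3 + (-1)*a*b*x2*y1 + (-1)*a*b*x1*y2 + (-1)*a^2*x1*y1 + a^2*x0*y0) - ((-1)*c*d + b*e +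 (-1)*a*f)^2 * (x3*y3 + x2*y2 + x1*y1 + (-1)*x0*y0)) + (x3*y3 + x2*y2 + x1*y1 + (-1)*x0*y0) * (1 - L) := by
  have hLne : L ≠ 0 := ne_of_gt hLpos
  have hg : (x3*y3 + x2*y2 + x1*y1 + (-1)*x0*y0) ≤ 0 := by
    linarith [csAux x0 (-x1) (-x2) (-x3) y0 y1 y2 y3 hx0.le (by linarith [hx]) hy0.le hy]
  have hM := lemM a b c d e f x0 x1 x2 x3 y0 y1 y2 y3 hx hx0 hy hy0
  have hS : (0:ℝ) ≤ 1 + (f^2 + e^2 + d^2 + (-1)*c^2 + (-1)*b^2 + (-1)*a^2) - ((-1)*c*d + b*e + (-1)*a*f)^2 := by rw [← hL2]; exact sq_nonneg L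
  have hA : (0:ℝ) ≤ 1 + (f^2 + e^2 + d^2 + (-1)*c^2 + (-1)*b^2 + (-1)*a^2)/2 := by linarith [hS, sq_nonneg ((-1)*c*d + b*e + (-1)*a*f)]
  have hLle : L ≤ 1 + (f^2 + e^2 + d^2 + (-1)*c^2 + (-1)*b^2 + (-1)*a^2)/2 := by
    refine sqrtLe _ _ hA hLpos ?_
    linarith [hL2, sq_nonneg (f^2 + e^2 + d^2 + (-1)*c^2 + (-1)*b^2 + (-1)*a^2), sq_nonneg ((-1)*c*d + b*e + (-1)*a*f)]
  rw [lemKey a b c d e f x0 x1 x2 x3 y0 y1 y2 y3 L hLne hL2]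
  have hprod : 0 ≤ (-(x3*y3 + x2*y2 + x1*y1 + (-1)*x0*y0)) * (1 + (f^2 + e^2 + d^2 + (-1)*c^2 + (-1)*b^2 + (-1)*a^2)/2 - L) :=
    mul_nonneg (neg_nonneg.mpr hg) (by linarith)
  have h2 : 0 ≤ ((1/2)*f^2*x3*y3 + (1/2)*f^2*x2*y2 + (-1/2)*f^2*x1*y1 + (1/2)*f^2*x0*y0 + e*f*x2*y1 + e*f*x1*y2 + (1/2)*e^2*x3*y3 + (-1/2)*e^2*x2*y2 + (1/2)*e^2*x1*y1 + (1/2)*e^2*x0*y0 + (-1)*d*f*x3*y1 + (-1)*d*f*x1*y3 + d*e*x3*y2 + d*e*x2*y3 + (-1/2)*d^2*x3*y3 + (1/2)*d^2*x2*y2 + (1/2)*d^2*x1*y1 + (1/2)*d^2*x0*y0 + c*f*x2*y0 + c*f*x0*y2 + c*e*x1*y0 + c*e*x0*y1 + (-1/2)*c^2*x3*y3 + (1/2)*c^2*x2*y2 + (1/2)*c^2*x1*y1 + (1/2)*c^2*x0*y0 + (-1)*b*f*x3*y0 + (-1)*b*f*x0*y3 + b*d*x1*y0 + b*d*x0*y1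 + (-1)*b*c*x3*y2 + (-1)*b*c*x2*y3 + (1/2)*b^2*x3*y3 + (-1/2)*b^2*x2*y2 + (1/2)*b^2*x1*y1 + (1/2)*b^2*x0*y0 + (-1)*a*e*x3*y0 + (-1)*a*e*x0*y3 + (-1)*a*d*x2*y0 + (-1)*a*d*x0*y2 + (-1)*a*c*x3*y1 + (-1)*a*c*x1*y3 + (-1)*a*b*x2*y1 + (-1)*a*b*x1*y2 + (1/2)*a^2*x3*y3 + (1/2)*a^2*x2*y2 + (-1/2)*a^2*x1*y1 + (1/2)*a^2*x0*y0) + (x3*y3 + x2*y2 + x1*y1 + (-1)*x0*y0) * (L - 1 - (f^2 + e^2 + d^2 + (-1)*c^2 + (-1)*b^2 + (-1)*a^2)/2) := by linarith [hM, hprod]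
  exact mul_nonneg (inv_nonneg.mpr hLpos.le) h2

/-- The MBI energy-momentum tensor satisfies the dominant energy condition:
`T(X,Y) ≥ 0` for all future-directed causal vectors `X, Y`, whenever
`1 + I₁ - I₂² ≥ 0` and `ℓ = (1 + I₁ - I₂²)^{1/2} > 0`. -/
theorem stmt9 (F : Fin 4 → Fin 4 → ℝ) (hF : ∀ μ ν, F μ ν = - F ν μ)
    (hreal : 0 ≤ 1 + I₁ F - (I₂ F) ^ 2) (hpos : 0 < ℓMBI F)
    (X Y : Fin 4 → ℝ)
    (hXcausal : ip X X ≤ 0) (hXfuture : 0 < X 0)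
    (hYcausal : ip Y Y ≤ 0) (hYfuture : 0 < Y 0) :
    0 ≤ ∑ μ : Fin 4, ∑ ν : Fin 4, TMBI F μ ν * X μ * Y ν := by
  have h00 : F 0 0 = 0 := by have := hF 0 0; linarith
  have h11 : F 1 1 = 0 := by have := hF 1 1; linarith
  have h22 : F 2 2 = 0 := by have := hF 2 2; linarith
  have h33 : F 3 3 = 0 := by have := hF 3 3; linarith
  have hI2v : I₂ F = ((-1)*F 0 3*F 1 2 + F 0 2*F 1 3 + (-1)*F 0 1*F 2 3) := by
    simp only [I₂, dual, eps, Fin.sum_univ_four, raiseEq]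
    norm_num [show (0:Fin 4) ≠ 1 by decide, show (0:Fin 4) ≠ 2 by decide, show (0:Fin 4) ≠ 3 by decide, show (1:Fin 4) ≠ 0 by decide, show (1:Fin 4) ≠ 2 by decide, show (1:Fin 4) ≠ 3 by decide, show (2:Fin 4) ≠ 0 by decide, show (2:Fin 4) ≠ 1 by decide, show (2:Fin 4) ≠ 3 by decide, show (3:Fin 4) ≠ 0 by decide, show (3:Fin 4) ≠ 1 by decide, show (3:Fin 4) ≠ 2 by decide,
      show (0:Fin 4).val = 0 from rfl, show (1:Fin 4).val = 1 from rfl,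
      show (2:Fin 4).val = 2 from rfl, show (3:Fin 4).val = 3 from rfl,
      h00, h11, h22, h33, hF 1 0, hF 2 0, hF 3 0, hF 2 1, hF 3 1, hF 3 2]
    ring
  have hI1v : I₁ F = (F 2 3^2 + F 1 3^2 + F 1 2^2 + (-1)*F 0 3^2 + (-1)*F 0 2^2 + (-1)*F 0 1^2) := by
    simp only [I₁, Fin.sum_univ_four, raiseEq]
    norm_num [show (0:Fin 4) ≠ 1 by decide, show (0:Fin 4) ≠ 2 by decide, show (0:Fin 4) ≠ 3 by decide, show (1:Fin 4) ≠ 0 by decide, show (1:Fin 4) ≠ 2 by decide, show (1:Fin 4) ≠ 3 by decide, show (2:Fin 4) ≠ 0 by decide, show (2:Fin 4) ≠ 1 by decide, show (2:Fin 4) ≠ 3 by decide, show (3:Fin 4) ≠ 0 by decide, show (3:Fin 4) ≠ 1 by decide, show (3:Fin 4) ≠ 2 by decide,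
      h00, h11, h22, h33, hF 1 0, hF 2 0, hF 3 0, hF 2 1, hF 3 1, hF 3 2]
    ring
  have hipX : X 1^2 + X 2^2 + X 3^2 ≤ X 0^2 := by
    have h : ip X X = -(X 0)^2 + (X 1)^2 + (X 2)^2 + (X 3)^2 := by
      simp only [ip, Fin.sum_univ_four, etaEq]
      norm_num [show (0:Fin 4) ≠ 1 by decide, show (0:Fin 4) ≠ 2 by decide, show (0:Fin 4) ≠ 3 by decide, show (1:Fin 4) ≠ 0 by decide, show (1:Fin 4) ≠ 2 by decide, show (1:Fin 4) ≠ 3 by decide, show (2:Fin 4) ≠ 0 by decide, show (2:Fin 4) ≠ 1 by decide, show (2:Fin 4) ≠ 3 by decide, show (3:Fin 4) ≠ 0 by decide, show (3:Fin 4) ≠ 1 by decide, show (3:Fin 4) ≠ 2 by decide]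
      ring
    rw [h] at hXcausal; linarith
  have hipY : Y 1^2 + Y 2^2 + Y 3^2 ≤ Y 0^2 := by
    have h : ip Y Y = -(Y 0)^2 + (Y 1)^2 + (Y 2)^2 + (Y 3)^2 := by
      simp only [ip, Fin.sum_univ_four, etaEq]
      norm_num [show (0:Fin 4) ≠ 1 by decide, show (0:Fin 4) ≠ 2 by decide, show (0:Fin 4) ≠ 3 by decide, show (1:Fin 4) ≠ 0 by decide, show (1:Fin 4) ≠ 2 by decide, show (1:Fin 4) ≠ 3 by decide, show (2:Fin 4) ≠ 0 by decide, show (2:Fin 4) ≠ 1 by decide, show (2:Fin 4) ≠ 3 by decide, show (3:Fin 4) ≠ 0 by decide, show (3:Fin 4) ≠ 1 by decide, show (3:Fin 4) ≠ 2 by decide]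
      ring
    rw [h] at hYcausal; linarith
  have hL2 : (ℓMBI F)^2 = 1 + (F 2 3^2 + F 1 3^2 + F 1 2^2 + (-1)*F 0 3^2 + (-1)*F 0 2^2 + (-1)*F 0 1^2) - ((-1)*F 0 3*F 1 2 + F 0 2*F 1 3 + (-1)*F 0 1*F 2 3)^2 := by
    rw [← hI1v, ← hI2v]
    exact Real.sq_sqrt hreal
  have hexp : (∑ μ : Fin 4, ∑ ν : Fin 4, TMBI F μ ν * X μ * Y ν)
      = (ℓMBI F)⁻¹ * ((F 2 3^2*X 3*Y 3 + F 2 3^2*X 2*Y 2 + F 1 3*F 2 3*X 2*Y 1 + F 1 3*F 2 3*X 1*Y 2 + F 1 3^2*X 3*Y 3 + F 1 3^2*X 1*Y 1 + (-1)*F 1 2*F 2 3*X 3*Y 1 + (-1)*F 1 2*F 2 3*X 1*Y 3 + F 1 2*F 1 3*X 3*Y 2 + F 1 2*F 1 3*X 2*Y 3 + F 1 2^2*X 2*Y 2 + F 1 2^2*X 1*Y 1 + F 0 3*F 2 3*X 2*Y 0 + F 0 3*F 2 3*X 0*Y 2 + F 0 3*F 1 3*X 1*Y 0 + F 0 3*F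 1 3*X 0*Y 1 + (-1)*F 0 3^2*X 3*Y 3 + F 0 3^2*X 0*Y 0 + (-1)*F 0 2*F 2 3*X 3*Y 0 + (-1)*F 0 2*F 2 3*X 0*Y 3 + F 0 2*F 1 2*X 1*Y 0 + F 0 2*F 1 2*X 0*Y 1 + (-1)*F 0 2*F 0 3*X 3*Y 2 + (-1)*F 0 2*F 0 3*X 2*Y 3 + (-1)*F 0 2^2*X 2*Y 2 + F 0 2^2*X 0*Y 0 + (-1)*F 0 1*F 1 3*X 3*Y 0 + (-1)*F 0 1*F 1 3*X 0*Y 3 + (-1)*F 0 1*F 1 2*X 2*Y 0 + (-1)*F 0 1*F 1 2*X 0*Y 2 + (-1)*F 0 1*F 0 3*X 3*Y 1 + (-1)*F 0 1*F 0 3*X 1*Y 3 + (-1)*F 0 1*F 0 2*X 2*Y 1 + (-1)*F 0 1*F 0 2*X 1*Y 2 + (-1)*F 0 1^2*X 1*Y 1 + F 0 1^2*X 0*Y 0) - ((-1)*F 0 3*F 1 2 + F 0 2*F 1 3 + (-1)*F 0 1*F 2 3)^2 * (X 3*Y 3 + X 2*Y 2 + X 1*Y 1 + (-1)*X 0*Y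 0)) + (X 3*Y 3 + X 2*Y 2 + X 1*Y 1 + (-1)*X 0*Y 0) * (1 - ℓMBI F) := by
    rw [show (((-1)*F 0 3*F 1 2 + F 0 2*F 1 3 + (-1)*F 0 1*F 2 3) : ℝ) = I₂ F from hI2v.symm]
    simp only [TMBI, Fin.sum_univ_four, etaEq]
    norm_num [show (0:Fin 4) ≠ 1 by decide, show (0:Fin 4) ≠ 2 by decide, show (0:Fin 4) ≠ 3 by decide, show (1:Fin 4) ≠ 0 by decide, show (1:Fin 4) ≠ 2 by decide, show (1:Fin 4) ≠ 3 by decide, show (2:Fin 4) ≠ 0 by decide, show (2:Fin 4) ≠ 1 by decide, show (2:Fin 4) ≠ 3 by decide, show (3:Fin 4) ≠ 0 by decide, show (3:Fin 4) ≠ 1 by decide, show (3:Fin 4) ≠ 2 by decide,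
      h00, h11, h22, h33, hF 1 0, hF 2 0, hF 3 0, hF 2 1, hF 3 1, hF 3 2]
    ring
  rw [hexp]
  exact mainIneq (F 0 1) (F 0 2) (F 0 3) (F 1 2) (F 1 3) (F 2 3)
    (X 0) (X 1) (X 2) (X 3) (Y 0) (Y 1) (Y 2) (Y 3) (ℓMBI F)
    hL2 hpos hipX hXfuture hipY hYfuture
end

section
/- Let B, D ∈ R³ with ℓ² defined by ℓ² = (1+|B|²)²/(1+|B|²+|D|²+|B×D|²), and let E = (D + B×(D×B))/(1+|B|²+|D|²+|D×B|²)^{1/2}. Then ℓ² = 1 + |B|² - |E|² - (E·B)², i.e. the MBI constitutive relation is consistent: ℓ²[E,B] expressed in terms of (E,B) equals ℓ² expressed in terms of (B,D). -/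
open Matrix

/-- The electric field determined from `(B,D)` by inverting the Born–Infeld constitutive
relation: `E = (D + B×(D×B)) / (1 + |B|² + |D|² + |D×B|²)^{1/2}`. -/
noncomputable def Evec (B D : Fin 3 → ℝ) : Fin 3 → ℝ :=
  fun i => (D i + crossProduct B (crossProduct D B) i) /
    Real.sqrt (1 + B ⬝ᵥ B + D ⬝ᵥ D + (crossProduct D B) ⬝ᵥ (crossProduct D B))

/-- Consistency of the MBI constitutive relations: for all `B, D ∈ ℝ³`,
`ℓ²` expressed in terms of `(B,D)` equals `ℓ²` expressed in terms of `(E,B)`: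
`(1+|B|²)² / (1 + |B|² + |D|² + |B×D|²) = 1 + |B|² - |E|² - (E·B)²`. -/
theorem stmt18 (B D : Fin 3 → ℝ) :
    (1 + B ⬝ᵥ B) ^ 2 / (1 + B ⬝ᵥ B + D ⬝ᵥ D + (crossProduct B D) ⬝ᵥ (crossProduct B D))
      = 1 + B ⬝ᵥ B - (Evec B D) ⬝ᵥ (Evec B D) - ((Evec B D) ⬝ᵥ B) ^ 2 := by
  set s := 1 + B ⬝ᵥ B + D ⬝ᵥ D + (crossProduct D B) ⬝ᵥ (crossProduct D B) with hsdef
  set X : Fin 3 → ℝ := fun i => D i + crossProduct B (crossProduct D B) i with hXdef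
  have hs : (0:ℝ) < s := by
    rw [hsdef]
    simp only [crossProduct, dotProduct, Fin.sum_univ_three, LinearMap.mk₂_apply,
      cons_val_zero, cons_val_one, head_cons, cons_val_two, tail_cons]
    nlinarith [sq_nonneg (B 0), sq_nonneg (B 1), sq_nonneg (B 2), sq_nonneg (D 0),
      sq_nonneg (D 1), sq_nonneg (D 2), sq_nonneg (D 1 * B 2 - D 2 * B 1),
      sq_nonneg (D 2 * B 0 - D 0 * B 2), sq_nonneg (D 0 * B 1 - D 1 * B 0)]
  have ht : Real.sqrt s * Real.sqrt s = s := Real.mul_self_sqrt hs.le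
  have ht0 : Real.sqrt s ≠ 0 := by positivity
  have hE : Evec B D = fun i => X i / Real.sqrt s := rfl
  have e1 : (Evec B D) ⬝ᵥ (Evec B D) = (X ⬝ᵥ X) / s := by
    rw [hE]
    simp only [dotProduct, Fin.sum_univ_three, div_mul_div_comm, ht, ← add_div]
  have e2 : ((Evec B D) ⬝ᵥ B) ^ 2 = (X ⬝ᵥ B) ^ 2 / s := by
    rw [hE]
    simp only [dotProduct, Fin.sum_univ_three, div_mul_eq_mul_div, ← add_div, div_pow,
      Real.sq_sqrt hs.le]
  rw [e1, e2, hsdef, hXdef]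
  simp only [crossProduct, dotProduct, Fin.sum_univ_three, LinearMap.mk₂_apply,
    cons_val_zero, cons_val_one, head_cons, cons_val_two, tail_cons]
  rw [hsdef] at hs
  simp only [crossProduct, dotProduct, Fin.sum_univ_three, LinearMap.mk₂_apply,
    cons_val_zero, cons_val_one, head_cons, cons_val_two, tail_cons] at hs
  have h1 : (1:ℝ) + (B 0 * B 0 + B 1 * B 1 + B 2 * B 2) + (D 0 * D 0 + D 1 * D 1 + D 2 * D 2) +
      ((B 1 * D 2 - B 2 * D 1) * (B 1 * D 2 - B 2 * D 1) +
        (B 2 * D 0 - B 0 * D 2) * (B 2 * D 0 - B 0 * D 2) +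
        (B 0 * D 1 - B 1 * D 0) * (B 0 * D 1 - B 1 * D 0)) ≠ 0 := by nlinarith
  have h2 : (1:ℝ) + (B 0 * B 0 + B 1 * B 1 + B 2 * B 2) + (D 0 * D 0 + D 1 * D 1 + D 2 * D 2) +
      ((D 1 * B 2 - D 2 * B 1) * (D 1 * B 2 - D 2 * B 1) +
        (D 2 * B 0 - D 0 * B 2) * (D 2 * B 0 - D 0 * B 2) +
        (D 0 * B 1 - D 1 * B 0) * (D 0 * B 1 - D 1 * B 0)) ≠ 0 := hs.ne'
  field_simp
  ring
end
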